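/- Let 𝔸 and 𝔹 be categories with finite limits, V : 𝔸 → 𝔹 a faithful functor preserving finite limits, and p : V×V×V → V a V-Mal'tsev operation. Let A be an object of 𝔸 with endomorphisms s, t : A → A satisfying s∘t = t and t∘s = s, for which property (P1) holds. Then for every object X of 𝔸 and morphisms x₁, y₂, z₂, z₃ : X → A with s∘x₁ = s∘y₂ and t∘y₂ = t∘z₂ = t∘z₃, one has p_A⟨p_A⟨Vx₁, Vy₂, Vz₂⟩, Vz₂, Vz₃⟩ = p_A⟨Vx₁, Vy₂, Vz₃⟩. -/

import Mathlib

open CategoryTheory CategoryTheory.Limits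

/-- A `V`-Mal'tsev operation: a natural transformation `p : V×V×V → V` whose
components `p_A : V(A) × V(A) × V(A) ⟶ V(A)` satisfy
`p_A ∘ ⟨x,y,y⟩ = x = p_A ∘ ⟨y,y,x⟩`. -/
structure VMaltsevOperation {𝔸 𝔹 : Type*} [Category 𝔸] [Category 𝔹]
    [HasFiniteLimits 𝔹] (V : 𝔸 ⥤ 𝔹) where
  app : ∀ A : 𝔸, (V.obj A ⨯ V.obj A ⨯ V.obj A) ⟶ V.obj A
  naturality : ∀ {A A' : 𝔸} (f : A ⟶ A'),
    prod.map (V.map f) (prod.map (V.map f) (V.map f)) ≫ app A' = app A ≫ V.map f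
  maltsev_left : ∀ {T : 𝔹} {A : 𝔸} (x y : T ⟶ V.obj A),
    prod.lift x (prod.lift y y) ≫ app A = x
  maltsev_right : ∀ {T : 𝔹} {A : 𝔸} (x y : T ⟶ V.obj A),
    prod.lift y (prod.lift y x) ≫ app A = x

/-- The Mal'tsev operation applied to three generalized elements `x, y, z : T ⟶ V(A)`:
`p_A ∘ ⟨x, y, z⟩`. -/
noncomputable def VMaltsevOperation.papp {𝔸 𝔹 : Type*} [Category 𝔸] [Category 𝔹]
    [HasFiniteLimits 𝔹] {V : 𝔸 ⥤ 𝔹} (p : VMaltsevOperation V)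
    {T : 𝔹} {A : 𝔸} (x y z : T ⟶ V.obj A) : T ⟶ V.obj A :=
  prod.lift x (prod.lift y z) ≫ p.app A

/-- Property (P1) for a triple `(A, s, t)`: for all `α, β, γ : X ⟶ A` with
`s∘α = s∘β` and `t∘β = t∘γ` there is a unique `φ : X ⟶ A` with
`V(φ) = p_A ∘ ⟨V(α), V(β), V(γ)⟩`. -/
def PropertyP1 {𝔸 𝔹 : Type*} [Category 𝔸] [Category 𝔹]
    [HasFiniteLimits 𝔹] {V : 𝔸 ⥤ 𝔹} (p : VMaltsevOperation V)
    {A : 𝔸} (s t : A ⟶ A) : Prop :=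
  ∀ (X : 𝔸) (α β γ : X ⟶ A), α ≫ s = β ≫ s → β ≫ t = γ ≫ t →
    ∃! φ : X ⟶ A, V.map φ = p.papp (V.map α) (V.map β) (V.map γ)

/-!
Apply (P1) to the generic triple, the projections `π₁, π₂, π₃` of the object of all triples
`(α, β, γ)` with `s α = s β` and `t β = t γ`: this gives `q` with `V q = p⟨Vπ₁, Vπ₂, Vπ₃⟩`, and
naturality of `p` at `q` shows that `p` commutes with itself on 3 × 3 matrices whose rows are
such triples. For the matrix `(x₁, y₂, z₂; z₂, z₂, z₂; z₂, z₂, z₃)` the rows give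
`p⟨p⟨x₁, y₂, z₂⟩, z₂, z₃⟩`, and the columns reduce by the Mal'tsev identities to `x₁, y₂, z₃`.
-/

namespace VMaltsevOperation

variable {𝔸 𝔹 : Type*} [Category 𝔸] [Category 𝔹] [HasFiniteLimits 𝔹] {V : 𝔸 ⥤ 𝔹}
  (p : VMaltsevOperation V)

@[simp]
theorem papp_diag_right {T : 𝔹} {A : 𝔸} (x y : T ⟶ V.obj A) : p.papp x y y = x :=
  p.maltsev_left x y

@[simp]
theorem papp_diag_left {T : 𝔹} {A : 𝔸} (x y : T ⟶ V.obj A) : p.papp y y x = x :=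
  p.maltsev_right x y

theorem comp_papp {T T' : 𝔹} {A : 𝔸} (u : T' ⟶ T) (x y z : T ⟶ V.obj A) :
    u ≫ p.papp x y z = p.papp (u ≫ x) (u ≫ y) (u ≫ z) := by
  simp only [papp, ← Category.assoc]
  congr 1
  ext <;> simp

theorem papp_comp_map {T : 𝔹} {A A' : 𝔸} (x y z : T ⟶ V.obj A) (f : A ⟶ A') :
    p.papp x y z ≫ V.map f = p.papp (x ≫ V.map f) (y ≫ V.map f) (z ≫ V.map f) := by
  simp only [papp, Category.assoc, ← p.naturality f]
  rw [← Category.assoc, prod.lift_map, prod.lift_map]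

theorem papp_comp_map_of_map_eq_papp {T : 𝔹} {Y A : 𝔸} {q f g h : Y ⟶ A}
    (hq : V.map q = p.papp (V.map f) (V.map g) (V.map h)) (x y z : T ⟶ V.obj Y) :
    p.papp (x ≫ V.map q) (y ≫ V.map q) (z ≫ V.map q) =
      p.papp (p.papp (x ≫ V.map f) (y ≫ V.map f) (z ≫ V.map f))
        (p.papp (x ≫ V.map g) (y ≫ V.map g) (z ≫ V.map g))
        (p.papp (x ≫ V.map h) (y ≫ V.map h) (z ≫ V.map h)) := by
  rw [← papp_comp_map, hq, comp_papp, papp_comp_map, papp_comp_map, papp_comp_map]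

end VMaltsevOperation

section ComposableTriples

variable {𝔸 : Type*} [Category 𝔸] [HasPullbacks 𝔸] {A : 𝔸} (s t : A ⟶ A)

/-- The object of triples `(α, β, γ)` with `s α = s β` and `t β = t γ`. -/
noncomputable abbrev composableTriples : 𝔸 :=
  pullback (pullback.snd s s) (pullback.fst t t)

namespace composableTriples

noncomputable def π₁ : composableTriples s t ⟶ A := pullback.fst _ _ ≫ pullback.fst s s

noncomputable def π₂ : composableTriples s t ⟶ A := pullback.fst _ _ ≫ pullback.snd s s

noncomputable def π₃ : composableTriples s t ⟶ A := pullback.snd _ _ ≫ pullback.snd t t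

theorem π₁_comp_eq_π₂_comp : π₁ s t ≫ s = π₂ s t ≫ s := by
  rw [π₁, π₂, Category.assoc, Category.assoc, pullback.condition]

theorem π₂_comp_eq_π₃_comp : π₂ s t ≫ t = π₃ s t ≫ t := by
  rw [π₂, π₃, Category.assoc, Category.assoc, ← pullback.condition (f := t),
    pullback.condition_assoc]

variable {s t} {X : 𝔸}

noncomputable def lift (α β γ : X ⟶ A) (hs : α ≫ s = β ≫ s) (ht : β ≫ t = γ ≫ t) :
    X ⟶ composableTriples s t :=
  pullback.lift (pullback.lift α β hs) (pullback.lift β γ ht)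
    (by rw [pullback.lift_snd, pullback.lift_fst])

variable {α β γ : X ⟶ A} (hs : α ≫ s = β ≫ s) (ht : β ≫ t = γ ≫ t)

@[simp]
theorem lift_π₁ : lift α β γ hs ht ≫ π₁ s t = α := by
  rw [lift, π₁, pullback.lift_fst_assoc, pullback.lift_fst]

@[simp]
theorem lift_π₂ : lift α β γ hs ht ≫ π₂ s t = β := by
  rw [lift, π₂, pullback.lift_fst_assoc, pullback.lift_snd]

@[simp]
theorem lift_π₃ : lift α β γ hs ht ≫ π₃ s t = γ := by
  rw [lift, π₃, pullback.lift_snd_assoc, pullback.lift_snd]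

end composableTriples

end ComposableTriples

open composableTriples in
theorem PropertyP1.papp_papp_comm {𝔸 𝔹 : Type*} [Category 𝔸] [Category 𝔹] [HasPullbacks 𝔸]
    [HasFiniteLimits 𝔹] {V : 𝔸 ⥤ 𝔹} {p : VMaltsevOperation V} {A : 𝔸} {s t : A ⟶ A}
    (hP1 : PropertyP1 p s t) {X : 𝔸} {a₁ a₂ a₃ b₁ b₂ b₃ c₁ c₂ c₃ : X ⟶ A}
    (ha : a₁ ≫ s = a₂ ≫ s) (ha' : a₂ ≫ t = a₃ ≫ t)
    (hb : b₁ ≫ s = b₂ ≫ s) (hb' : b₂ ≫ t = b₃ ≫ t)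
    (hc : c₁ ≫ s = c₂ ≫ s) (hc' : c₂ ≫ t = c₃ ≫ t) :
    p.papp (p.papp (V.map a₁) (V.map a₂) (V.map a₃)) (p.papp (V.map b₁) (V.map b₂) (V.map b₃))
        (p.papp (V.map c₁) (V.map c₂) (V.map c₃)) =
      p.papp (p.papp (V.map a₁) (V.map b₁) (V.map c₁)) (p.papp (V.map a₂) (V.map b₂) (V.map c₂))
        (p.papp (V.map a₃) (V.map b₃) (V.map c₃)) := by
  obtain ⟨q, hq, -⟩ := hP1 _ _ _ _ (π₁_comp_eq_π₂_comp s t) (π₂_comp_eq_π₃_comp s t)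
  have row_eq : ∀ {α β γ : X ⟶ A} (hs : α ≫ s = β ≫ s) (ht : β ≫ t = γ ≫ t),
      p.papp (V.map α) (V.map β) (V.map γ) = V.map (lift α β γ hs ht) ≫ V.map q := by
    intro α β γ hs ht
    rw [hq, p.comp_papp, ← V.map_comp, ← V.map_comp, ← V.map_comp, lift_π₁, lift_π₂, lift_π₃]
  rw [row_eq ha ha', row_eq hb hb', row_eq hc hc', p.papp_comp_map_of_map_eq_papp hq]
  simp only [← V.map_comp, lift_π₁, lift_π₂, lift_π₃]

theorem maltsev_assoc_right_general
    {𝔸 𝔹 : Type*} [Category 𝔸] [Category 𝔹]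
    [HasFiniteLimits 𝔸] [HasFiniteLimits 𝔹]
    (V : 𝔸 ⥤ 𝔹)
    (p : VMaltsevOperation V)
    {A : 𝔸} (s t : A ⟶ A)
    (hP1 : PropertyP1 p s t)
    {X : 𝔸} (x₁ y₂ z₂ z₃ : X ⟶ A)
    (h1 : x₁ ≫ s = y₂ ≫ s) (h2 : y₂ ≫ t = z₂ ≫ t) (h3 : z₂ ≫ t = z₃ ≫ t) :
    p.papp (p.papp (V.map x₁) (V.map y₂) (V.map z₂)) (V.map z₂) (V.map z₃) =
      p.papp (V.map x₁) (V.map y₂) (V.map z₃) := by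
  simpa using hP1.papp_papp_comm (b₁ := z₂) (b₂ := z₂) (b₃ := z₂) (c₁ := z₂) (c₂ := z₂)
    h1 h2 rfl rfl rfl h3

/-- Right absorption identity `p⟨p⟨x₁, y₂, z₂⟩, z₂, z₃⟩ = p⟨x₁, y₂, z₃⟩` for a
triple `(A, s, t)` satisfying (P1). -/
theorem maltsev_assoc_right
    {𝔸 𝔹 : Type*} [Category 𝔸] [Category 𝔹]
    [HasFiniteLimits 𝔸] [HasFiniteLimits 𝔹]
    (V : 𝔸 ⥤ 𝔹) [V.Faithful] [PreservesFiniteLimits V]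
    (p : VMaltsevOperation V)
    {A : 𝔸} (s t : A ⟶ A) (hst : t ≫ s = t) (hts : s ≫ t = s)
    (hP1 : PropertyP1 p s t)
    {X : 𝔸} (x₁ y₂ z₂ z₃ : X ⟶ A)
    (h1 : x₁ ≫ s = y₂ ≫ s) (h2 : y₂ ≫ t = z₂ ≫ t) (h3 : z₂ ≫ t = z₃ ≫ t) :
    p.papp (p.papp (V.map x₁) (V.map y₂) (V.map z₂)) (V.map z₂) (V.map z₃) =
      p.papp (V.map x₁) (V.map y₂) (V.map z₃) :=
  maltsev_assoc_right_general V p s t hP1 x₁ y₂ z₂ z₃ h1 h2 h3
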